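/- arXiv:2412.16845 — 4 statements merged into one kernel-verified Lean document; each statement's English description precedes it below -/
import Mathlib

section
/- Let U : ℝ³ × ℝ → ℝ⁸ be differentiable and let F : ℝ⁸ → ℝ^{8×3} be a linear map. Define f_k(x,t) := g_k(U(x,t)) where g_k(V) := V/4 + (1/(4λ²c²)) F(V) v_k with the D3Q4 velocities v_k. Then at every point (x,t), Σ_{k=0}^{3} ( ∂_t f_k + (v_k · ∇_x) f_k ) = ∂_t U + Σ_{j=1}^{3} ∂_{x_j} ( F(U) e_j ); that is, in the local-equilibrium limit the discrete-velocity kinetic transport recovers the macroscopic conservation law ∂_t U + ∇ · F(U) = 0 whenever the left-hand side vanishes. -/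
def d3q4 (lam c : ℝ) : Fin 4 → Fin 3 → ℝ :=
  ![![lam * c, lam * c, lam * c],
    ![lam * c, -(lam * c), -(lam * c)],
    ![-(lam * c), lam * c, -(lam * c)],
    ![-(lam * c), -(lam * c), lam * c]]

/-!
The equilibria are linear in `U`, so with `D = fderiv ℝ U p` the derivative of `f k` is
`w • D + s • F (D ·) *ᵥ v k`. Summing over the velocities, the vanishing first moment
`∑ k, v k = 0` kills every term linear in `v k`, and the isotropic second moment
`∑ k, v k i * v k j = μ δᵢⱼ` turns `∑ k, F (D (v k, 0)) *ᵥ v k` into `μ` times the divergence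
`∑ j, F (D (eⱼ, 0)) *ᵥ eⱼ`; the weights satisfy `card ι * w = 1` and `s * μ = 1`.
-/

open Finset Matrix

section Moments

variable {ι n E : Type*} [Fintype ι] [Fintype n] [DecidableEq n] [AddCommGroup E] [Module ℝ E]

theorem LinearMap.apply_eq_sum_sum_single (B : (n → ℝ) →ₗ[ℝ] (n → ℝ) →ₗ[ℝ] E) (x y : n → ℝ) :
    B x y = ∑ i, ∑ j, (x i * y j) • B (Pi.single i 1) (Pi.single j 1) := by
  conv_lhs => rw [pi_eq_sum_univ' x, pi_eq_sum_univ' y]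
  simp only [map_sum, map_smul, LinearMap.sum_apply, LinearMap.smul_apply, Finset.smul_sum,
    smul_smul]
  rw [Finset.sum_comm]
  simp only [mul_comm]

theorem LinearMap.sum_apply_self_of_isotropic (B : (n → ℝ) →ₗ[ℝ] (n → ℝ) →ₗ[ℝ] E)
    {v : ι → n → ℝ} {μ : ℝ} (hvv : ∀ i j, ∑ k, v k i * v k j = if i = j then μ else 0) :
    ∑ k, B (v k) (v k) = μ • ∑ j, B (Pi.single j 1) (Pi.single j 1) := by
  simp only [B.apply_eq_sum_sum_single (v _)]
  rw [Finset.sum_comm]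
  simp only [Finset.sum_comm (γ := ι), ← Finset.sum_smul, hvv, ite_smul, zero_smul,
    Finset.sum_ite_eq, Finset.mem_univ, if_true, Finset.smul_sum]

end Moments

theorem d3q4_sum (lam c : ℝ) : ∑ k, d3q4 lam c k = 0 := by
  ext i
  fin_cases i <;> simp [d3q4, Fin.sum_univ_four]

theorem d3q4_second_moment (lam c : ℝ) (i j : Fin 3) :
    ∑ k, d3q4 lam c k i * d3q4 lam c k j = if i = j then 4 * (lam * c) ^ 2 else 0 := by
  fin_cases i <;> fin_cases j <;> simp [d3q4, Fin.sum_univ_four] <;> ring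

section Transport

variable {ι n m : Type*} [Fintype ι] [Fintype n]

noncomputable def fluxAlong [Fintype m] (F : (m → ℝ) →ₗ[ℝ] Matrix m n ℝ) (v : n → ℝ) :
    (m → ℝ) →L[ℝ] m → ℝ :=
  LinearMap.toContinuousLinearMap ((mulVecBilin ℝ ℝ).flip v ∘ₗ F)

@[simp]
theorem fluxAlong_apply [Fintype m] (F : (m → ℝ) →ₗ[ℝ] Matrix m n ℝ) (v : n → ℝ) (W : m → ℝ) :
    fluxAlong F v W = F W *ᵥ v :=
  rfl

theorem HasFDerivAt.linear_apply_mulVec [Fintype m] {E : Type*} [NormedAddCommGroup E]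
    [NormedSpace ℝ E]
    (F : (m → ℝ) →ₗ[ℝ] Matrix m n ℝ) (v : n → ℝ) {U : E → m → ℝ} {D : E →L[ℝ] m → ℝ} {p : E}
    (hU : HasFDerivAt U D p) :
    HasFDerivAt (fun q => F (U q) *ᵥ v) ((fluxAlong F v).comp D) p :=
  (fluxAlong F v).hasFDerivAt.comp p hU

variable {v : ι → n → ℝ} {μ w s : ℝ} {F : (m → ℝ) →ₗ[ℝ] Matrix m n ℝ}

theorem sum_equilibrium_time_transport (hv : ∑ k, v k = 0) (hw : Fintype.card ι * w = 1)
    (b : m → ℝ) : ∑ k, (w • b + s • F b *ᵥ v k) = b := by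
  rw [sum_add_distrib, ← smul_sum, ← smul_sum, ← mulVec_sum, hv, mulVec_zero, smul_zero, add_zero,
    sum_const, card_univ, ← Nat.cast_smul_eq_nsmul ℝ, smul_smul, mul_comm, hw, one_smul]

theorem sum_equilibrium_space_transport [DecidableEq n] (hv : ∑ k, v k = 0)
    (hvv : ∀ i j, ∑ k, v k i * v k j = if i = j then μ else 0) (hs : s * μ = 1)
    (A : (n → ℝ) →ₗ[ℝ] m → ℝ) :
    ∑ k, (w • A (v k) + s • F (A (v k)) *ᵥ v k) =
      ∑ j, F (A (Pi.single j 1)) *ᵥ Pi.single j 1 := by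
  have hB := ((mulVecBilin ℝ ℝ).comp (F ∘ₗ A)).sum_apply_self_of_isotropic hvv
  simp only [LinearMap.comp_apply, mulVecBilin_apply] at hB
  rw [sum_add_distrib, ← smul_sum, ← smul_sum, ← map_sum, hv, map_zero, smul_zero, zero_add, hB,
    smul_smul, hs, one_smul]

theorem sum_fderiv_equilibrium_transport [DecidableEq n] [Fintype m] (hv : ∑ k, v k = 0)
    (hvv : ∀ i j, ∑ k, v k i * v k j = if i = j then μ else 0)
    (hw : Fintype.card ι * w = 1) (hs : s * μ = 1) {U : (n → ℝ) × ℝ → m → ℝ} {p : (n → ℝ) × ℝ} (hU : DifferentiableAt ℝ U p)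
    {f : ι → (n → ℝ) × ℝ → m → ℝ} (hf : ∀ k q, f k q = w • U q + s • F (U q) *ᵥ v k) :
    ∑ k, (fderiv ℝ (f k) p (0, 1) + fderiv ℝ (f k) p (v k, 0)) =
      fderiv ℝ U p (0, 1) +
        ∑ j, fderiv ℝ (fun q => F (U q) *ᵥ Pi.single j 1) p (Pi.single j 1, 0) := by
  set D := fderiv ℝ U p
  have hf' (k : ι) : fderiv ℝ (f k) p = w • D + s • (fluxAlong F (v k)).comp D := by
    rw [funext (hf k)]
    exact (hU.hasFDerivAt.const_smul w |>.add
      ((hU.hasFDerivAt.linear_apply_mulVec F (v k)).const_smul s)).fderiv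
  have hflux (j : n) : fderiv ℝ (fun q => F (U q) *ᵥ Pi.single j 1) p =
      (fluxAlong F (Pi.single j 1)).comp D :=
    (hU.hasFDerivAt.linear_apply_mulVec F _).fderiv
  simp only [hf', hflux, _root_.add_apply, _root_.smul_apply, ContinuousLinearMap.comp_apply,
    fluxAlong_apply]
  rw [sum_add_distrib, sum_equilibrium_time_transport hv hw]
  congr 1
  exact sum_equilibrium_space_transport hv hvv hs (D.comp (.inl ℝ _ ℝ)).toLinearMap

end Transport

/-- In the local-equilibrium limit, the sum over the D3Q4 beams of the kinetic transport
terms `∂_t f_k + (v_k · ∇_x) f_k` equals `∂_t U + Σ_j ∂_{x_j} (F(U) e_j)`, i.e. the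
discrete-velocity kinetic model recovers the macroscopic conservation law
`∂_t U + ∇·F(U) = 0` whenever the kinetic transport terms vanish. -/
theorem d3q4_equilibrium_transport_recovers_conservation_law
    (lam c : ℝ) (hlam : 0 < lam) (hc : 0 < c)
    (U : (Fin 3 → ℝ) × ℝ → (Fin 8 → ℝ)) (hU : Differentiable ℝ U)
    (F : (Fin 8 → ℝ) →ₗ[ℝ] Matrix (Fin 8) (Fin 3) ℝ)
    (f : Fin 4 → ((Fin 3 → ℝ) × ℝ) → (Fin 8 → ℝ))
    (hf : ∀ k p, f k p = (1 / 4 : ℝ) • U p +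
      (1 / (4 * lam ^ 2 * c ^ 2)) • (F (U p)).mulVec (d3q4 lam c k)) :
    ∀ p : (Fin 3 → ℝ) × ℝ,
      (∑ k : Fin 4,
        (fderiv ℝ (f k) p ((0 : Fin 3 → ℝ), (1 : ℝ)) +
         fderiv ℝ (f k) p (d3q4 lam c k, (0 : ℝ)))) =
      fderiv ℝ U p ((0 : Fin 3 → ℝ), (1 : ℝ)) +
        ∑ j : Fin 3,
          fderiv ℝ (fun q => (F (U q)).mulVec (Pi.single j (1 : ℝ))) p
            (Pi.single j (1 : ℝ), (0 : ℝ)) := by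
  intro p
  have hs : 1 / (4 * lam ^ 2 * c ^ 2) * (4 * (lam * c) ^ 2) = 1 := by
    field_simp [hlam.ne', hc.ne']
  exact sum_fderiv_equilibrium_transport (d3q4_sum lam c) (d3q4_second_moment lam c)
    (by norm_num) hs (hU p) hf
end

section
/- Let f : ℤ × ℤ → ℝ be a grid function, let v_x, v_y, Δt, Δx, Δy be positive reals with v_x Δt = Δx and v_y Δt = Δy. Define the transverse-corrected interface states f*ˣ_{i,j} := f_{i,j} + (v_y Δt / (2Δy)) (f_{i,j−1} − f_{i,j}) and f*ʸ_{i,j} := f_{i,j} + (v_x Δt / (2Δx)) (f_{i−1,j} − f_{i,j}), the numerical fluxes 𝓕_{i+1/2,j} := v_x f*ˣ_{i,j} and 𝓖_{i,j+1/2} := v_y f*ʸ_{i,j}, and the corner-transport-upwind update f^{new}_{i,j} := f_{i,j} − (Δt/Δx)(𝓕_{i+1/2,j} − 𝓕_{i−1/2,j}) − (Δt/Δy)(𝓖_{i,j+1/2} − 𝓖_{i,j−1/2}). Then f^{new}_{i,j} = f_{i−1,j−1} for all (i,j); that is, at unit Courant number the Beam-CTU update coincides with the exact transport (shift) solution of ∂_t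 f + v·∇f = 0. -/
/-!
Written in terms of the Courant numbers `νx = vx Δt / Δx` and `νy = vy Δt / Δy`, the CTU update
is exactly bilinear interpolation of `f` at the foot `(i - νx, j - νy)` of the characteristic:
the weights of `f(i,j)`, `f(i-1,j)`, `f(i,j-1)`, `f(i-1,j-1)` are `(1-νx)(1-νy)`, `νx(1-νy)`,
`(1-νx)νy`, `νx νy`. At unit Courant numbers only the corner weight survives.
-/

namespace CTU

noncomputable def transverseX (νy : ℝ) (f : ℤ × ℤ → ℝ) (i j : ℤ) : ℝ :=
  f (i, j) + νy / 2 * (f (i, j - 1) - f (i, j))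

noncomputable def transverseY (νx : ℝ) (f : ℤ × ℤ → ℝ) (i j : ℤ) : ℝ :=
  f (i, j) + νx / 2 * (f (i - 1, j) - f (i, j))

noncomputable def step (νx νy : ℝ) (f : ℤ × ℤ → ℝ) (i j : ℤ) : ℝ :=
  f (i, j) - νx * (transverseX νy f i j - transverseX νy f (i - 1) j)
    - νy * (transverseY νx f i j - transverseY νx f i (j - 1))

theorem step_eq_bilinear (νx νy : ℝ) (f : ℤ × ℤ → ℝ) (i j : ℤ) :
    step νx νy f i j =
      (1 - νx) * (1 - νy) * f (i, j) + νx * (1 - νy) * f (i - 1, j)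
        + (1 - νx) * νy * f (i, j - 1) + νx * νy * f (i - 1, j - 1) := by
  simp only [step, transverseX, transverseY]
  ring

theorem step_one_one (f : ℤ × ℤ → ℝ) (i j : ℤ) : step 1 1 f i j = f (i - 1, j - 1) := by
  rw [step_eq_bilinear]
  ring

end CTU

theorem ctu_unit_courant_is_exact_transport_general
    (f : ℤ × ℤ → ℝ) (vx vy Δt Δx Δy : ℝ)
    (hΔx : 0 < Δx) (hΔy : 0 < Δy)
    (hcx : vx * Δt = Δx) (hcy : vy * Δt = Δy)
    (fstarx fstary Fflux Gflux fnew : ℤ × ℤ → ℝ)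
    (hfsx : ∀ i j : ℤ, fstarx (i, j) =
      f (i, j) + (vy * Δt / (2 * Δy)) * (f (i, j - 1) - f (i, j)))
    (hfsy : ∀ i j : ℤ, fstary (i, j) =
      f (i, j) + (vx * Δt / (2 * Δx)) * (f (i - 1, j) - f (i, j)))
    (hF : ∀ i j : ℤ, Fflux (i, j) = vx * fstarx (i, j))
    (hG : ∀ i j : ℤ, Gflux (i, j) = vy * fstary (i, j))
    (hnew : ∀ i j : ℤ, fnew (i, j) =
      f (i, j) - (Δt / Δx) * (Fflux (i, j) - Fflux (i - 1, j))
               - (Δt / Δy) * (Gflux (i, j) - Gflux (i, j - 1))) :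
    ∀ i j : ℤ, fnew (i, j) = f (i - 1, j - 1) := by
  intro i j
  have hνx : vx * Δt / Δx = 1 := by rw [hcx, div_self hΔx.ne']
  have hνy : vy * Δt / Δy = 1 := by rw [hcy, div_self hΔy.ne']
  have hstep : fnew (i, j) = CTU.step (vx * Δt / Δx) (vy * Δt / Δy) f i j := by
    rw [hnew, hF, hF, hG, hG, hfsx, hfsx, hfsy, hfsy]
    simp only [CTU.step, CTU.transverseX, CTU.transverseY]
    ring
  rw [hstep, hνx, hνy, CTU.step_one_one]

/-- At unit Courant number (`v_x Δt = Δx`, `v_y Δt = Δy`), the corner transport upwind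
(Beam-CTU) update coincides with the exact transport (shift) solution:
`f^{new}_{i,j} = f_{i−1,j−1}`. -/
theorem ctu_unit_courant_is_exact_transport
    (f : ℤ × ℤ → ℝ) (vx vy Δt Δx Δy : ℝ)
    (hvx : 0 < vx) (hvy : 0 < vy) (hΔt : 0 < Δt) (hΔx : 0 < Δx) (hΔy : 0 < Δy)
    (hcx : vx * Δt = Δx) (hcy : vy * Δt = Δy)
    (fstarx fstary Fflux Gflux fnew : ℤ × ℤ → ℝ)
    (hfsx : ∀ i j : ℤ, fstarx (i, j) =
      f (i, j) + (vy * Δt / (2 * Δy)) * (f (i, j - 1) - f (i, j)))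
    (hfsy : ∀ i j : ℤ, fstary (i, j) =
      f (i, j) + (vx * Δt / (2 * Δx)) * (f (i - 1, j) - f (i, j)))
    (hF : ∀ i j : ℤ, Fflux (i, j) = vx * fstarx (i, j))
    (hG : ∀ i j : ℤ, Gflux (i, j) = vy * fstary (i, j))
    (hnew : ∀ i j : ℤ, fnew (i, j) =
      f (i, j) - (Δt / Δx) * (Fflux (i, j) - Fflux (i - 1, j))
               - (Δt / Δy) * (Gflux (i, j) - Gflux (i, j - 1))) :
    ∀ i j : ℤ, fnew (i, j) = f (i - 1, j - 1) :=
  ctu_unit_courant_is_exact_transport_general f vx vy Δt Δx Δy hΔx hΔy hcx hcy fstarx fstary Fflux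
    Gflux fnew hfsx hfsy hF hG hnew
end

section
/- Let c, χ, γ be real numbers and let A₁ be the 8×8 real matrix (acting on U = (E_x, E_y, E_z, B_x, B_y, B_z, φ, ψ)) whose only nonzero entries are A₁[1,7] = c²χ, A₁[2,6] = c², A₁[3,5] = −c², A₁[4,8] = γ, A₁[5,3] = −1, A₁[6,2] = 1, A₁[7,1] = χ, A₁[8,4] = c²γ (rows and columns indexed from 1). Then the characteristic polynomial of A₁ is (X² − c²)² (X² − χ²c²) (X² − γ²c²); moreover, if c > 0, χ > 0, and γ > 0, then A₁ is diagonalizable over ℝ, so the one-dimensional PHM system is strictly hyperbolic with wave speeds ±c (each of multiplicity two), ±χc, and ±γc. -/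
/-!
Each field component of the 1-D PHM system is coupled to exactly one other one:
`E_x ↔ φ`, `E_y ↔ B_z`, `E_z ↔ B_y`, `B_x ↔ ψ`. After permuting the unknowns, `A₁` is
block diagonal with four `2 × 2` blocks `[[0, a], [b, 0]]`, whose characteristic polynomial
is `X² − ab`. Here `ab` is `χ²c²`, `c²`, `c²`, `γ²c²`, a nonzero square `s²` when
`c, χ, γ > 0`, and then the block has the independent eigenvectors `(a, ±s)` for `±s`.
-/

open Polynomial

/-- The flux Jacobian of the one-dimensional PHM system in the `x`-direction. -/
def phmA1 (c χ γ : ℝ) : Matrix (Fin 8) (Fin 8) ℝ :=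
  !![0, 0, 0, 0, 0, 0, c ^ 2 * χ, 0;
     0, 0, 0, 0, 0, c ^ 2, 0, 0;
     0, 0, 0, 0, -(c ^ 2), 0, 0, 0;
     0, 0, 0, 0, 0, 0, 0, γ;
     0, 0, -1, 0, 0, 0, 0, 0;
     0, 1, 0, 0, 0, 0, 0, 0;
     χ, 0, 0, 0, 0, 0, 0, 0;
     0, 0, 0, c ^ 2 * γ, 0, 0, 0, 0]

open Matrix

namespace Matrix

variable {R : Type*} [CommRing R] {m n o : Type*} [Fintype m] [DecidableEq m]
  [Fintype n] [DecidableEq n] [Fintype o] [DecidableEq o]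

theorem charmatrix_blockDiagonal (M : o → Matrix m m R) :
    charmatrix (blockDiagonal M) = blockDiagonal fun k => charmatrix (M k) := by
  ext ⟨i, k⟩ ⟨j, l⟩
  simp only [charmatrix_apply, blockDiagonal_apply, diagonal_apply, Prod.mk.injEq]
  split_ifs <;> simp_all

theorem charpoly_blockDiagonal (M : o → Matrix m m R) :
    (blockDiagonal M).charpoly = ∏ k, (M k).charpoly := by
  rw [charpoly, charmatrix_blockDiagonal, det_blockDiagonal]
  rfl

theorem charpoly_antidiagonal_fin_two (a b : R) :
    !![0, a; b, 0].charpoly = X ^ 2 - C (a * b) := by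
  simp [charpoly, det_fin_two, sq]

def IsDiagonalizable (A : Matrix n n R) : Prop :=
  ∃ (P : Matrix n n R) (d : n → R), IsUnit P.det ∧ A * P = P * diagonal d

theorem IsDiagonalizable.exists_eq_mul_diagonal_mul_inv {A : Matrix n n R}
    (hA : A.IsDiagonalizable) :
    ∃ (P : Matrix n n R) (d : n → R), IsUnit P.det ∧ A = P * diagonal d * P⁻¹ := by
  obtain ⟨P, d, hP, hAP⟩ := hA
  exact ⟨P, d, hP, by rw [← hAP, mul_nonsing_inv_cancel_right _ _ hP]⟩

theorem IsDiagonalizable.reindex {A : Matrix m m R} (hA : A.IsDiagonalizable) (e : m ≃ n) :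
    (Matrix.reindex e e A).IsDiagonalizable := by
  obtain ⟨P, d, hP, hAP⟩ := hA
  refine ⟨Matrix.reindex e e P, d ∘ e.symm, by rwa [det_reindex_self], ?_⟩
  simp only [reindex_apply, submatrix_mul_equiv, hAP, ← submatrix_diagonal_equiv]

theorem isDiagonalizable_blockDiagonal {M : o → Matrix m m R}
    (hM : ∀ k, (M k).IsDiagonalizable) : (blockDiagonal M).IsDiagonalizable := by
  choose P d hP hMP using hM
  refine ⟨blockDiagonal P, fun p => d p.2 p.1, ?_, ?_⟩
  · rw [det_blockDiagonal]
    exact IsUnit.prod_univ_iff.mpr hP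
  · rw [← blockDiagonal_diagonal, ← blockDiagonal_mul, ← blockDiagonal_mul]
    exact congrArg blockDiagonal (funext hMP)

theorem isDiagonalizable_antidiagonal_fin_two {a b s : R} (hab : a * b = s ^ 2)
    (has : IsUnit (2 * a * s)) : !![0, a; b, 0].IsDiagonalizable := by
  refine ⟨!![a, a; s, -s], ![s, -s], ?_, ?_⟩
  · rw [det_fin_two_of, ← IsUnit.neg_iff]
    convert has using 1
    ring
  · rw [diagonal_fin_two, mul_fin_two, mul_fin_two]
    simp [← sq, mul_comm b, hab]

end Matrix

def phmBlocks (c χ γ : ℝ) : Fin 4 → Matrix (Fin 2) (Fin 2) ℝ :=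
  ![!![0, c ^ 2 * χ; χ, 0],
    !![0, c ^ 2; 1, 0],
    !![0, -(c ^ 2); -1, 0],
    !![0, γ; c ^ 2 * γ, 0]]

-- Pairs the coupled components (E_x, φ), (E_y, B_z), (E_z, B_y), (B_x, ψ) into the blocks.
def phmBlockEquiv : Fin 2 × Fin 4 ≃ Fin 8 where
  toFun p := ![![0, 1, 2, 3], ![6, 5, 4, 7]] p.1 p.2
  invFun i := ![(0, 0), (0, 1), (0, 2), (0, 3), (1, 2), (1, 1), (1, 0), (1, 3)] i
  left_inv := by decide
  right_inv := by decide

theorem reindex_blockDiagonal_phmBlocks (c χ γ : ℝ) :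
    reindex phmBlockEquiv phmBlockEquiv (blockDiagonal (phmBlocks c χ γ)) = phmA1 c χ γ := by
  ext i j
  fin_cases i <;> fin_cases j <;> rfl

/-- The characteristic polynomial of the 1-D PHM flux Jacobian is
`(X² − c²)² (X² − χ²c²) (X² − γ²c²)`, and for positive `c, χ, γ` the matrix is
diagonalizable over `ℝ`: the PHM system is strictly hyperbolic with wave speeds
`±c` (multiplicity two), `±χc` and `±γc`. -/
theorem phmA1_charpoly_and_diagonalizable (c χ γ : ℝ) :
    (phmA1 c χ γ).charpoly =
      (X ^ 2 - C (c ^ 2)) ^ 2 * (X ^ 2 - C (χ ^ 2 * c ^ 2)) *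
        (X ^ 2 - C (γ ^ 2 * c ^ 2)) ∧
    (0 < c → 0 < χ → 0 < γ →
      ∃ (P : Matrix (Fin 8) (Fin 8) ℝ) (d : Fin 8 → ℝ),
        IsUnit P.det ∧ phmA1 c χ γ = P * Matrix.diagonal d * P⁻¹) := by
  rw [← reindex_blockDiagonal_phmBlocks]
  refine ⟨?_, fun hc hχ hγ => ?_⟩
  · rw [charpoly_reindex, charpoly_blockDiagonal, Fin.prod_univ_four]
    simp only [phmBlocks, cons_val_zero, cons_val_one, cons_val, charpoly_antidiagonal_fin_two,
      map_mul, map_pow, map_neg, map_one]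
    ring
  · refine ((isDiagonalizable_blockDiagonal fun k => ?_).reindex _).exists_eq_mul_diagonal_mul_inv
    fin_cases k
    · exact isDiagonalizable_antidiagonal_fin_two (s := c * χ) (by ring) (by simp [hc.ne', hχ.ne'])
    · exact isDiagonalizable_antidiagonal_fin_two (s := c) (by ring) (by simp [hc.ne'])
    · exact isDiagonalizable_antidiagonal_fin_two (s := c) (by ring) (by simp [hc.ne'])
    · exact isDiagonalizable_antidiagonal_fin_two (s := c * γ) (by ring) (by simp [hc.ne', hγ.ne'])
end

section
/- Let ε₀, c, χ > 0, let E, B : ℝ × ℝ³ → ℝ³ and φ : ℝ × ℝ³ → ℝ be twice continuously differentiable, and let ρ : ℝ × ℝ³ → ℝ, J : ℝ × ℝ³ → ℝ³ be continuously differentiable, satisfying the PHM equations ∂_t E = c² ∇ × B − χ c² ∇φ − J/ε₀ and (1/χ) ∂_t φ = ρ/ε₀ − div E. Then the correction potential φ satisfies the inhomogeneous wave equation ∂_{tt} φ − χ² c² Δφ = (χ/ε₀) ( ∂_t ρ + div J ); in particular, inconsistencies between the charge and current distributions act as the source of waves in φ that propagate at speed χc, and if charge conservation ∂_t ρ + div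 J = 0 holds then φ satisfies the homogeneous wave equation with speed χc. -/
/-- Spatial partial derivative `∂_{x_j} F_i` of a time-dependent vector field. -/
noncomputable def spd (F : ℝ × (Fin 3 → ℝ) → Fin 3 → ℝ) (j : Fin 3)
    (t : ℝ) (x : Fin 3 → ℝ) (i : Fin 3) : ℝ :=
  fderiv ℝ (fun y => F (t, y) i) x (Pi.single j 1)

/-- Spatial divergence of a time-dependent vector field. -/
noncomputable def sdiv (F : ℝ × (Fin 3 → ℝ) → Fin 3 → ℝ) (t : ℝ) (x : Fin 3 → ℝ) : ℝ :=
  ∑ j : Fin 3, spd F j t x j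

/-- Spatial curl of a time-dependent vector field. -/
noncomputable def scurl (F : ℝ × (Fin 3 → ℝ) → Fin 3 → ℝ) (t : ℝ) (x : Fin 3 → ℝ) :
    Fin 3 → ℝ :=
  ![spd F 1 t x 2 - spd F 2 t x 1,
    spd F 2 t x 0 - spd F 0 t x 2,
    spd F 0 t x 1 - spd F 1 t x 0]

/-- Spatial gradient of a time-dependent scalar field. -/
noncomputable def sgrad (φ : ℝ × (Fin 3 → ℝ) → ℝ) (t : ℝ) (x : Fin 3 → ℝ)
    (i : Fin 3) : ℝ :=
  fderiv ℝ (fun y => φ (t, y)) x (Pi.single i 1)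

/-- Spatial Laplacian of a time-dependent scalar field. -/
noncomputable def slap (φ : ℝ × (Fin 3 → ℝ) → ℝ) (t : ℝ) (x : Fin 3 → ℝ) : ℝ :=
  ∑ j : Fin 3, fderiv ℝ (fun y => sgrad φ t y j) x (Pi.single j 1)

/-! Differentiating the Gauss law in time and substituting the Ampère law gives
`∂ₜₜφ = χ (∂ₜρ/ε₀ − div ∂ₜE) = χ (∂ₜρ/ε₀ − c² div curl B + χc² Δφ + div J/ε₀)`.
Both identities used along the way, `∂ₜ div E = div ∂ₜE` and `div curl B = 0`,
are instances of the symmetry of second derivatives of a `C²` function. -/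

section Slices

variable {V F : Type*} [NormedAddCommGroup V] [NormedSpace ℝ V]
  [NormedAddCommGroup F] [NormedSpace ℝ F]

theorem ContDiff.differentiable_fderiv_apply {g : V → F} (hg : ContDiff ℝ 2 g) (u : V) :
    Differentiable ℝ (fun y => fderiv ℝ g y u) :=
  ((hg.fderiv_right (m := 1) (by norm_num)).clm_apply contDiff_const).differentiable
    one_ne_zero

theorem ContDiff.fderiv_fderiv_apply_comm {g : V → F} (hg : ContDiff ℝ 2 g) (p u w : V) :
    fderiv ℝ (fun q => fderiv ℝ g q u) p w = fderiv ℝ (fun q => fderiv ℝ g q w) p u := by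
  have hD : DifferentiableAt ℝ (fderiv ℝ g) p :=
    (hg.fderiv_right (m := 1) (by norm_num)).differentiable one_ne_zero p
  rw [fderiv_clm_apply hD (differentiableAt_const u),
    fderiv_clm_apply hD (differentiableAt_const w)]
  simpa using hg.contDiffAt.isSymmSndFDerivAt (by simp) w u

variable {f : ℝ × V → F} {t : ℝ} {x : V}

theorem hasDerivAt_comp_prodMk_left (hf : DifferentiableAt ℝ f (t, x)) :
    HasDerivAt (fun s => f (s, x)) (fderiv ℝ f (t, x) (1, 0)) t :=
  hf.hasFDerivAt.comp_hasDerivAt t ((hasDerivAt_id t).prodMk (hasDerivAt_const t x))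

theorem fderiv_comp_prodMk_right_apply (hf : DifferentiableAt ℝ f (t, x)) (v : V) :
    fderiv ℝ (fun y => f (t, y)) x v = fderiv ℝ f (t, x) (0, v) := by
  have hpair : HasFDerivAt (fun y : V => (t, y)) (ContinuousLinearMap.inr ℝ ℝ V) x :=
    (hasFDerivAt_const t x).prodMk (hasFDerivAt_id x)
  exact DFunLike.congr_fun (hf.hasFDerivAt.comp x hpair).fderiv v

theorem ContDiff.hasDerivAt_fderiv_comp_prodMk_right (hf : ContDiff ℝ 2 f) (v : V) :
    HasDerivAt (fun s => fderiv ℝ (fun y => f (s, y)) x v)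
      (fderiv ℝ (fun y => deriv (fun s => f (s, y)) t) x v) t := by
  have hf₁ : Differentiable ℝ f := hf.differentiable two_ne_zero
  have hslice :
      (fun s => fderiv ℝ (fun y => f (s, y)) x v) = fun s => fderiv ℝ f (s, x) (0, v) :=
    funext fun s => fderiv_comp_prodMk_right_apply (hf₁ _) v
  have hderiv : (fun y => deriv (fun s => f (s, y)) t) = fun y => fderiv ℝ f (t, y) (1, 0) :=
    funext fun y => (hasDerivAt_comp_prodMk_left (hf₁ _)).deriv
  rw [hslice, hderiv, fderiv_comp_prodMk_right_apply (hf.differentiable_fderiv_apply _ _),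
    ← hf.fderiv_fderiv_apply_comm]
  exact hasDerivAt_comp_prodMk_left (hf.differentiable_fderiv_apply _ _)

end Slices

section VectorCalculus

variable {t : ℝ} {x : Fin 3 → ℝ}

theorem hasDerivAt_sdiv {E : ℝ × (Fin 3 → ℝ) → Fin 3 → ℝ} (hE : ContDiff ℝ 2 E) :
    HasDerivAt (fun s => sdiv E s x)
      (sdiv (fun p i => deriv (fun s => E (s, p.2) i) p.1) t x) t :=
  HasDerivAt.fun_sum fun j _ =>
    (contDiff_pi.mp hE j).hasDerivAt_fderiv_comp_prodMk_right (Pi.single j 1)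

theorem sdiv_sub {F G : ℝ × (Fin 3 → ℝ) → Fin 3 → ℝ}
    (hF : DifferentiableAt ℝ (fun y => F (t, y)) x)
    (hG : DifferentiableAt ℝ (fun y => G (t, y)) x) :
    sdiv (fun p => F p - G p) t x = sdiv F t x - sdiv G t x := by
  simp only [sdiv, spd, Pi.sub_apply, ← Finset.sum_sub_distrib]
  refine Finset.sum_congr rfl fun j _ => ?_
  rw [fderiv_fun_sub (differentiableAt_pi.mp hF j) (differentiableAt_pi.mp hG j)]
  rfl

theorem sdiv_const_smul {F : ℝ × (Fin 3 → ℝ) → Fin 3 → ℝ} (a : ℝ)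
    (hF : DifferentiableAt ℝ (fun y => F (t, y)) x) :
    sdiv (fun p => a • F p) t x = a * sdiv F t x := by
  simp only [sdiv, spd, Pi.smul_apply, smul_eq_mul, Finset.mul_sum]
  refine Finset.sum_congr rfl fun j _ => ?_
  rw [fderiv_const_mul (differentiableAt_pi.mp hF j)]
  rfl

theorem sdiv_sgrad (φ : ℝ × (Fin 3 → ℝ) → ℝ) :
    sdiv (fun p => sgrad φ p.1 p.2) t x = slap φ t x :=
  rfl

theorem differentiableAt_sgrad {φ : ℝ × (Fin 3 → ℝ) → ℝ}
    (hφ : ContDiff ℝ 2 fun y => φ (t, y)) :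
    DifferentiableAt ℝ (fun y => sgrad φ t y) x :=
  differentiableAt_pi.mpr fun _ => (hφ.differentiable_fderiv_apply _).differentiableAt

theorem differentiableAt_scurl {B : ℝ × (Fin 3 → ℝ) → Fin 3 → ℝ}
    (hB : ContDiff ℝ 2 fun y => B (t, y)) :
    DifferentiableAt ℝ (fun y => scurl B t y) x := by
  have hspd (a i : Fin 3) : DifferentiableAt ℝ (fun y => spd B a t y i) x :=
    ((contDiff_pi.mp hB i).differentiable_fderiv_apply _).differentiableAt
  refine differentiableAt_pi.mpr fun i => ?_
  fin_cases i
  exacts [(hspd 1 2).sub (hspd 2 1), (hspd 2 0).sub (hspd 0 2), (hspd 0 1).sub (hspd 1 0)]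

theorem sdiv_scurl {B : ℝ × (Fin 3 → ℝ) → Fin 3 → ℝ} (hB : ContDiff ℝ 2 fun y => B (t, y)) :
    sdiv (fun p => scurl B p.1 p.2) t x = 0 := by
  have hB' (i : Fin 3) : ContDiff ℝ 2 fun y => B (t, y) i := contDiff_pi.mp hB i
  have hspd (a i : Fin 3) :
      DifferentiableAt ℝ (fun y => fderiv ℝ (fun z => B (t, z) i) y (Pi.single a 1)) x :=
    (hB' i).differentiable_fderiv_apply _ x
  simp only [sdiv, spd, Fin.sum_univ_three, scurl, Matrix.cons_val_zero, Matrix.cons_val_one,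
    Matrix.cons_val_two, Matrix.head_cons, Matrix.tail_cons]
  rw [fderiv_fun_sub (hspd 1 2) (hspd 2 1), fderiv_fun_sub (hspd 2 0) (hspd 0 2),
    fderiv_fun_sub (hspd 0 1) (hspd 1 0)]
  simp only [sub_apply]
  rw [(hB' 2).fderiv_fderiv_apply_comm x (Pi.single 1 1),
    (hB' 1).fderiv_fderiv_apply_comm x (Pi.single 0 1),
    (hB' 0).fderiv_fderiv_apply_comm x (Pi.single 2 1)]
  ring

theorem hasDerivAt_sdiv_of_ampere {ε₀ c χ : ℝ} {E B J : ℝ × (Fin 3 → ℝ) → Fin 3 → ℝ}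
    {φ : ℝ × (Fin 3 → ℝ) → ℝ} (hE : ContDiff ℝ 2 E) (hB : ContDiff ℝ 2 fun y => B (t, y))
    (hφ : ContDiff ℝ 2 fun y => φ (t, y)) (hJ : DifferentiableAt ℝ (fun y => J (t, y)) x)
    (hAmpere : ∀ (t : ℝ) (x : Fin 3 → ℝ) (i : Fin 3),
      deriv (fun s => E (s, x) i) t =
        c ^ 2 * scurl B t x i - χ * c ^ 2 * sgrad φ t x i - J (t, x) i / ε₀) :
    HasDerivAt (fun s => sdiv E s x) (-(χ * c ^ 2 * slap φ t x) - sdiv J t x / ε₀) t := by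
  have hEt : (fun p i => deriv (fun s => E (s, p.2) i) p.1) = fun p =>
      c ^ 2 • scurl B p.1 p.2 - (χ * c ^ 2) • sgrad φ p.1 p.2 - ε₀⁻¹ • J p := by
    ext p i
    simp [hAmpere, div_eq_inv_mul]
  have hcurl := differentiableAt_scurl (x := x) hB
  have hgrad := differentiableAt_sgrad (x := x) hφ
  convert hasDerivAt_sdiv (t := t) (x := x) hE using 1
  rw [hEt,
    sdiv_sub ((hcurl.fun_const_smul _).fun_sub (hgrad.fun_const_smul _)) (hJ.fun_const_smul _),
    sdiv_sub (hcurl.fun_const_smul _) (hgrad.fun_const_smul _), sdiv_const_smul _ hcurl,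
    sdiv_scurl hB, sdiv_const_smul _ hgrad, sdiv_sgrad, sdiv_const_smul _ hJ]
  ring

end VectorCalculus

theorem phm_phi_wave_equation_general (ε₀ c χ : ℝ) (hχ : 0 < χ)
    (E B : ℝ × (Fin 3 → ℝ) → Fin 3 → ℝ) (φ : ℝ × (Fin 3 → ℝ) → ℝ)
    (ρ : ℝ × (Fin 3 → ℝ) → ℝ) (J : ℝ × (Fin 3 → ℝ) → Fin 3 → ℝ)
    (hE : ContDiff ℝ 2 E) (hB : ContDiff ℝ 2 B) (hφ : ContDiff ℝ 2 φ)
    (hρ : ContDiff ℝ 1 ρ) (hJ : ContDiff ℝ 1 J)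
    (hAmpere : ∀ (t : ℝ) (x : Fin 3 → ℝ) (i : Fin 3),
      deriv (fun s => E (s, x) i) t =
        c ^ 2 * scurl B t x i - χ * c ^ 2 * sgrad φ t x i - J (t, x) i / ε₀)
    (hGauss : ∀ (t : ℝ) (x : Fin 3 → ℝ),
      (1 / χ) * deriv (fun s => φ (s, x)) t = ρ (t, x) / ε₀ - sdiv E t x) :
    ∀ (t : ℝ) (x : Fin 3 → ℝ),
      deriv (fun s => deriv (fun r => φ (r, x)) s) t - χ ^ 2 * c ^ 2 * slap φ t x =
        (χ / ε₀) * (deriv (fun s => ρ (s, x)) t + sdiv J t x) := by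
  intro t x
  have hφt (s : ℝ) : deriv (fun r => φ (r, x)) s = χ * (ρ (s, x) / ε₀ - sdiv E s x) := by
    rw [← hGauss, ← mul_assoc, mul_one_div_cancel hχ.ne', one_mul]
  have hρt := hasDerivAt_comp_prodMk_left ((hρ.differentiable one_ne_zero) (t, x))
  have hdivEt := hasDerivAt_sdiv_of_ampere hE (hB.comp (contDiff_prodMk_right t))
    (hφ.comp (contDiff_prodMk_right t))
    ((hJ.comp (contDiff_prodMk_right t)).differentiable one_ne_zero x) hAmpere
  have hφtt : HasDerivAt (fun s => deriv (fun r => φ (r, x)) s)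
      (χ * (deriv (fun s => ρ (s, x)) t / ε₀ -
        (-(χ * c ^ 2 * slap φ t x) - sdiv J t x / ε₀))) t := by
    rw [funext hφt, hρt.deriv]
    exact ((hρt.div_const ε₀).sub hdivEt).const_mul χ
  rw [hφtt.deriv]
  ring

/-- In the PHM system, the electric correction potential `φ` satisfies the
inhomogeneous wave equation `∂_{tt} φ − χ²c² Δφ = (χ/ε₀)(∂_t ρ + div J)`:
charge–current inconsistencies act as the source of waves in `φ` propagating at
speed `χc`, and if charge is conserved then `φ` satisfies the homogeneous wave
equation with speed `χc`. -/
theorem phm_phi_wave_equation (ε₀ c χ : ℝ) (hε₀ : 0 < ε₀) (hc : 0 < c) (hχ : 0 < χ)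
    (E B : ℝ × (Fin 3 → ℝ) → Fin 3 → ℝ) (φ : ℝ × (Fin 3 → ℝ) → ℝ)
    (ρ : ℝ × (Fin 3 → ℝ) → ℝ) (J : ℝ × (Fin 3 → ℝ) → Fin 3 → ℝ)
    (hE : ContDiff ℝ 2 E) (hB : ContDiff ℝ 2 B) (hφ : ContDiff ℝ 2 φ)
    (hρ : ContDiff ℝ 1 ρ) (hJ : ContDiff ℝ 1 J)
    (hAmpere : ∀ (t : ℝ) (x : Fin 3 → ℝ) (i : Fin 3),
      deriv (fun s => E (s, x) i) t =
        c ^ 2 * scurl B t x i - χ * c ^ 2 * sgrad φ t x i - J (t, x) i / ε₀)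
    (hGauss : ∀ (t : ℝ) (x : Fin 3 → ℝ),
      (1 / χ) * deriv (fun s => φ (s, x)) t = ρ (t, x) / ε₀ - sdiv E t x) :
    ∀ (t : ℝ) (x : Fin 3 → ℝ),
      deriv (fun s => deriv (fun r => φ (r, x)) s) t - χ ^ 2 * c ^ 2 * slap φ t x =
        (χ / ε₀) * (deriv (fun s => ρ (s, x)) t + sdiv J t x) :=
  phm_phi_wave_equation_general ε₀ c χ hχ E B φ ρ J hE hB hφ hρ hJ hAmpere hGauss
end
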